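/- Let X be a nonempty finite set and let p_E, p_M, p_S : X → ℝ be probability mass functions on X with p_E(x) > 0 for all x. Suppose there is a function δ : X → ℝ such that for every x ∈ X: 0 < δ(x) ≤ 1/2, δ(x) ≤ p_M(x) ≤ 1 − δ(x), δ(x) ≤ p_S(x) ≤ 1 − δ(x), and |p_S(x) − p_M(x)| ≥ δ(x). Then D_KL(p_E ‖ p_S) ≥ D_KL(p_E ‖ p_M) − Σ_{x ∈ X} ((1 − 2δ(x))/δ(x)) · p_E(x). -/
import Mathlib

theorem stmt_6 {X : Type*} [Fintype X] [Nonempty X]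
    (pE pM pS : X → ℝ) (δ : X → ℝ)
    (hE0 : ∀ x, 0 < pE x)
    (hM0 : ∀ x, 0 ≤ pM x) (hS0 : ∀ x, 0 ≤ pS x)
    (hE1 : ∑ x, pE x = 1) (hM1 : ∑ x, pM x = 1) (hS1 : ∑ x, pS x = 1)
    (hδ0 : ∀ x, 0 < δ x) (hδhalf : ∀ x, δ x ≤ 1/2)
    (hM1' : ∀ x, δ x ≤ pM x) (hM2 : ∀ x, pM x ≤ 1 - δ x)
    (hS1' : ∀ x, δ x ≤ pS x) (hS2 : ∀ x, pS x ≤ 1 - δ x)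
    (hnoise : ∀ x, |pS x - pM x| ≥ δ x) :
    ∑ x, pE x * Real.log (pE x / pS x) ≥
      ∑ x, pE x * Real.log (pE x / pM x)
        - ∑ x, ((1 - 2 * δ x) / δ x) * pE x := by
  rw [ge_iff_le, sub_le_iff_le_add, ← Finset.sum_add_distrib]
  apply Finset.sum_le_sum
  intro x _
  have hδ := hδ0 x
  have hMpos : 0 < pM x := lt_of_lt_of_le hδ (hM1' x)
  have hSpos : 0 < pS x := lt_of_lt_of_le hδ (hS1' x)
  have hEpos := hE0 x
  have hlog : Real.log (pS x / pM x) ≤ (1 - 2 * δ x) / δ x := by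
    have h1 : Real.log (pS x / pM x) ≤ pS x / pM x - 1 :=
      Real.log_le_sub_one_of_pos (div_pos hSpos hMpos)
    have h2 : pS x / pM x ≤ (1 - δ x) / δ x := by
      apply div_le_div₀ (by linarith [hS2 x]) (hS2 x) hδ (hM1' x)
    have : (1 - δ x) / δ x - 1 = (1 - 2 * δ x) / δ x := by
      field_simp; ring
    linarith
  have key : Real.log (pE x / pM x) ≤ Real.log (pE x / pS x) + (1 - 2 * δ x) / δ x := by
    rw [Real.log_div (ne_of_gt hEpos) (ne_of_gt hMpos),
        Real.log_div (ne_of_gt hEpos) (ne_of_gt hSpos)]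
    have : Real.log (pS x / pM x) = Real.log (pS x) - Real.log (pM x) :=
      Real.log_div (ne_of_gt hSpos) (ne_of_gt hMpos)
    linarith
  calc pE x * Real.log (pE x / pM x)
      ≤ pE x * (Real.log (pE x / pS x) + (1 - 2 * δ x) / δ x) := by
        exact mul_le_mul_of_nonneg_left key hEpos.le
    _ = pE x * Real.log (pE x / pS x) + (1 - 2 * δ x) / δ x * pE x := by ring
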